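/- Fix real numbers α, η, β with 1 < α < η < β, and real numbers N > 0, A > 0, B > 0. Set c_ext = −((η−α)(β−η)/(ηβα)) · ((η−α)/(β−α))^{η/(β−η)} · N^{β/(β−η)}/B^{η/(β−η)}. If c_ext < c < 0, then φ_c has exactly two critical points in (0,∞), say t⁺ < t⁻; moreover φ_c″(t⁺) > 0, φ_c″(t⁻) < 0, t⁺ is a local minimizer of φ_c, and t⁻ is a local maximizer of φ_c. -/

import Mathlib

/-!
With `a = N(η-α)/η` and `b = B(β-α)/β` one has
`φ_c'(t) = (α/A) t^(-α-1) (g(t) + cα)` where `g(t) = a t^η - b t^β`.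
The function `g` increases on `[0, t*]` and decreases to `-∞` on `[t*, ∞)`, where
`t*^(β-η) = aη/(bβ)`, and its maximum `g(t*)` equals `-α c_ext`. So for `c_ext < c < 0` the level
`-cα`, which lies strictly between `g 0 = 0` and `g(t*)`, is attained exactly twice, at
`t⁺ < t* < t⁻`. At a critical point `φ_c'' = (α/A) t^(-α-1) g'` has the sign of `g'`, positive at
`t⁺` and negative at `t⁻`, and the second derivative test concludes.
-/

open Set Filter Topology

/-- The fibering map `φ_c(t) = ((t^η/η)N − (t^β/β)B − c)/((t^α/α)A)` on `(0,∞)`. -/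
noncomputable def fib (α η β N A B c : ℝ) : ℝ → ℝ :=
  fun t => ((t ^ η / η) * N - (t ^ β / β) * B - c) / ((t ^ α / α) * A)

noncomputable def powDiff (a b η β t : ℝ) : ℝ := a * t ^ η - b * t ^ β

noncomputable def powDiffPeak (a b η β : ℝ) : ℝ := (a * η / (b * β)) ^ (1 / (β - η))

section PowDiff

variable {a b η β t : ℝ}

theorem hasDerivAt_powDiff (ht : 0 < t) :
    HasDerivAt (powDiff a b η β) (t ^ (η - 1) * (a * η - b * β * t ^ (β - η))) t := by
  have hsplit : t ^ (β - 1) = t ^ (η - 1) * t ^ (β - η) := by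
    rw [← Real.rpow_add ht]; ring_nf
  refine (((Real.hasDerivAt_rpow_const (p := η) (Or.inl ht.ne')).const_mul a).sub
    ((Real.hasDerivAt_rpow_const (p := β) (Or.inl ht.ne')).const_mul b)).congr_deriv ?_
  rw [hsplit]; ring

theorem continuous_powDiff (hη : 0 ≤ η) (hβ : 0 ≤ β) : Continuous (powDiff a b η β) :=
  (continuous_const.mul (Real.continuous_rpow_const hη)).sub
    (continuous_const.mul (Real.continuous_rpow_const hβ))

theorem powDiff_zero (hη : η ≠ 0) (hβ : β ≠ 0) : powDiff a b η β 0 = 0 := by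
  simp [powDiff, Real.zero_rpow hη, Real.zero_rpow hβ]

theorem powDiffPeak_pos (ha : 0 < a) (hb : 0 < b) (hη : 0 < η) (hηβ : η < β) :
    0 < powDiffPeak a b η β := by
  unfold powDiffPeak
  have := hη.trans hηβ
  positivity

theorem powDiffPeak_rpow (ha : 0 < a) (hb : 0 < b) (hη : 0 < η) (hηβ : η < β) :
    powDiffPeak a b η β ^ (β - η) = a * η / (b * β) := by
  have := hη.trans hηβ
  rw [powDiffPeak, one_div, Real.rpow_inv_rpow (by positivity) (sub_pos.2 hηβ).ne']

theorem deriv_powDiff_pos (ha : 0 < a) (hb : 0 < b) (hη : 0 < η) (hηβ : η < β)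
    (ht : 0 < t) (hts : t < powDiffPeak a b η β) : 0 < deriv (powDiff a b η β) t := by
  rw [(hasDerivAt_powDiff ht).deriv]
  have hβ := hη.trans hηβ
  have hlt : t ^ (β - η) < a * η / (b * β) := by
    rw [← powDiffPeak_rpow ha hb hη hηβ]
    exact Real.rpow_lt_rpow ht.le hts (sub_pos.2 hηβ)
  rw [lt_div_iff₀ (by positivity)] at hlt
  exact mul_pos (Real.rpow_pos_of_pos ht _) (by linarith)

theorem deriv_powDiff_neg (ha : 0 < a) (hb : 0 < b) (hη : 0 < η) (hηβ : η < β)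
    (hst : powDiffPeak a b η β < t) : deriv (powDiff a b η β) t < 0 := by
  have hs := powDiffPeak_pos ha hb hη hηβ
  have ht := hs.trans hst
  rw [(hasDerivAt_powDiff ht).deriv]
  have hβ := hη.trans hηβ
  have hlt : a * η / (b * β) < t ^ (β - η) := by
    rw [← powDiffPeak_rpow ha hb hη hηβ]
    exact Real.rpow_lt_rpow hs.le hst (sub_pos.2 hηβ)
  rw [div_lt_iff₀ (by positivity)] at hlt
  exact mul_neg_of_pos_of_neg (Real.rpow_pos_of_pos ht _) (by linarith)

theorem strictMonoOn_powDiff (ha : 0 < a) (hb : 0 < b) (hη : 0 < η) (hηβ : η < β) :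
    StrictMonoOn (powDiff a b η β) (Icc 0 (powDiffPeak a b η β)) := by
  refine strictMonoOn_of_deriv_pos (convex_Icc _ _)
    (continuous_powDiff hη.le (hη.trans hηβ).le).continuousOn fun t ht => ?_
  rw [interior_Icc] at ht
  exact deriv_powDiff_pos ha hb hη hηβ ht.1 ht.2

theorem strictAntiOn_powDiff (ha : 0 < a) (hb : 0 < b) (hη : 0 < η) (hηβ : η < β) :
    StrictAntiOn (powDiff a b η β) (Ici (powDiffPeak a b η β)) := by
  refine strictAntiOn_of_deriv_neg (convex_Ici _)
    (continuous_powDiff hη.le (hη.trans hηβ).le).continuousOn fun t ht => ?_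
  rw [interior_Ici] at ht
  exact deriv_powDiff_neg ha hb hη hηβ ht

theorem powDiff_powDiffPeak (ha : 0 < a) (hb : 0 < b) (hη : 0 < η) (hηβ : η < β) :
    powDiff a b η β (powDiffPeak a b η β) = a * (β - η) / β * powDiffPeak a b η β ^ η := by
  have hs := powDiffPeak_pos ha hb hη hηβ
  have hβ := hη.trans hηβ
  have hsplit : powDiffPeak a b η β ^ β = powDiffPeak a b η β ^ η * (a * η / (b * β)) := by
    rw [← powDiffPeak_rpow ha hb hη hηβ, ← Real.rpow_add hs, add_sub_cancel]
  rw [powDiff, hsplit]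
  field_simp

theorem tendsto_powDiff_atTop (hb : 0 < b) (hη : 0 < η) (hηβ : η < β) :
    Tendsto (powDiff a b η β) atTop atBot := by
  have hfac : Tendsto (fun t : ℝ => t ^ η * (a - b * t ^ (β - η))) atTop atBot :=
    (tendsto_rpow_atTop hη).atTop_mul_atBot₀ <| tendsto_atBot_add_const_left _ a <|
      tendsto_neg_atTop_atBot.comp <| (tendsto_rpow_atTop (sub_pos.2 hηβ)).const_mul_atTop hb
  refine hfac.congr' ?_
  filter_upwards [eventually_gt_atTop 0] with t ht
  have hsplit : t ^ β = t ^ η * t ^ (β - η) := by rw [← Real.rpow_add ht, add_sub_cancel]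
  rw [powDiff, hsplit]
  ring

end PowDiff

theorem exists_two_preimages_of_unimodal {f : ℝ → ℝ} {s y : ℝ} (hs : 0 ≤ s)
    (hf : Continuous f) (hmono : StrictMonoOn f (Icc 0 s)) (hanti : StrictAntiOn f (Ici s))
    (hf0 : f 0 < y) (hfs : y < f s) (hlim : Tendsto f atTop atBot) :
    ∃ tp tm, 0 < tp ∧ tp < s ∧ s < tm ∧ f tp = y ∧ f tm = y ∧
      ∀ t, 0 ≤ t → f t = y → t = tp ∨ t = tm := by
  obtain ⟨tp, ⟨htp0, htps⟩, hftp⟩ := intermediate_value_Ioo hs hf.continuousOn ⟨hf0, hfs⟩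
  obtain ⟨T, hfT, hsT⟩ := ((hlim.eventually_lt_atBot y).and (eventually_gt_atTop s)).exists
  obtain ⟨tm, ⟨hstm, -⟩, hftm⟩ := intermediate_value_Ioo' hsT.le hf.continuousOn ⟨hfT, hfs⟩
  refine ⟨tp, tm, htp0, htps, hstm, hftp, hftm, fun t ht hft => ?_⟩
  rcases le_or_gt t s with hts | hst
  · exact .inl <| hmono.injOn ⟨ht, hts⟩ ⟨htp0.le, htps.le⟩ (hft.trans hftp.symm)
  · exact .inr <| hanti.injOn hst.le hstm.le (hft.trans hftm.symm)

theorem deriv_deriv_eq_of_hasDerivAt_mul {f w g : ℝ → ℝ} {x g' : ℝ}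
    (hf : ∀ᶠ y in 𝓝 x, HasDerivAt f (w y * g y) y) (hw : DifferentiableAt ℝ w x)
    (hg : HasDerivAt g g' x) (hgx : g x = 0) :
    deriv (deriv f) x = w x * g' := by
  have hderiv : deriv f =ᶠ[𝓝 x] fun y => w y * g y := hf.mono fun y hy => hy.deriv
  rw [hderiv.deriv_eq, deriv_fun_mul hw hg.differentiableAt, hg.deriv, hgx]
  ring

theorem hasDerivAt_fib {α η β N A B c t : ℝ} (hα : α ≠ 0) (hη : η ≠ 0) (hβ : β ≠ 0)
    (hA : A ≠ 0) (ht : 0 < t) :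
    HasDerivAt (fib α η β N A B c)
      (α / A * t ^ (-α - 1) *
        (powDiff (N * (η - α) / η) (B * (β - α) / β) η β t + c * α)) t := by
  have hpow {p : ℝ} : HasDerivAt (fun t : ℝ => t ^ p) (p * (t ^ p / t)) t := by
    simpa [Real.rpow_sub_one ht.ne'] using Real.hasDerivAt_rpow_const (p := p) (Or.inl ht.ne')
  have htα := Real.rpow_pos_of_pos ht α
  have hden : t ^ α / α * A ≠ 0 := by positivity
  refine ((((hpow.div_const η).mul_const N).sub ((hpow.div_const β).mul_const B)).sub_const c
    |>.div ((hpow.div_const α).mul_const A) hden).congr_deriv ?_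
  rw [show -α - 1 = -(α + 1) by ring, Real.rpow_neg ht.le, Real.rpow_add_one ht.ne', powDiff]
  simp only [Pi.sub_apply]
  field_simp
  ring

theorem deriv_fib_eq_zero_iff {α η β N A B c t : ℝ} (hα : 0 < α) (hη : η ≠ 0) (hβ : β ≠ 0)
    (hA : 0 < A) (ht : 0 < t) :
    deriv (fib α η β N A B c) t = 0 ↔
      powDiff (N * (η - α) / η) (B * (β - α) / β) η β t = -(c * α) := by
  have hw : α / A * t ^ (-α - 1) ≠ 0 := by positivity
  rw [(hasDerivAt_fib hα.ne' hη hβ hA.ne' ht).deriv, mul_eq_zero, or_iff_right hw,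
    add_eq_zero_iff_eq_neg]

theorem deriv_deriv_fib {α η β N A B c t : ℝ} (hα : α ≠ 0) (hη : η ≠ 0) (hβ : β ≠ 0)
    (hA : A ≠ 0) (ht : 0 < t)
    (hcrit : powDiff (N * (η - α) / η) (B * (β - α) / β) η β t = -(c * α)) :
    deriv (deriv (fib α η β N A B c)) t =
      α / A * t ^ (-α - 1) * deriv (powDiff (N * (η - α) / η) (B * (β - α) / β) η β) t :=
  deriv_deriv_eq_of_hasDerivAt_mul
    (eventually_gt_nhds ht |>.mono fun _ hs => hasDerivAt_fib hα hη hβ hA hs)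
    ((Real.hasDerivAt_rpow_const (Or.inl ht.ne')).differentiableAt.const_mul _)
    ((hasDerivAt_powDiff ht).differentiableAt.hasDerivAt.add_const _)
    (by rw [hcrit, neg_add_cancel])

noncomputable def cExt (α η β N B : ℝ) : ℝ :=
  -((η - α) * (β - η) / (η * β * α)) * ((η - α) / (β - α)) ^ (η / (β - η)) *
    (N ^ (β / (β - η)) / B ^ (η / (β - η)))

theorem cExt_mul_eq {α η β N B : ℝ} (hα : 0 < α) (hαη : α < η) (hηβ : η < β)
    (hN : 0 < N) (hB : 0 < B) :
    cExt α η β N B * α = -powDiff (N * (η - α) / η) (B * (β - α) / β) η β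
      (powDiffPeak (N * (η - α) / η) (B * (β - α) / β) η β) := by
  have hη := hα.trans hαη
  have hβ := hη.trans hηβ
  have hηα := sub_pos.2 hαη
  have hβη := sub_pos.2 hηβ
  have hβα := sub_pos.2 (hαη.trans hηβ)
  have ha : 0 < N * (η - α) / η := by positivity
  have hb : 0 < B * (β - α) / β := by positivity
  have hratio : N * (η - α) / η * η / (B * (β - α) / β * β) = (η - α) / (β - α) * (N / B) := by
    field_simp
  have hpeak : powDiffPeak (N * (η - α) / η) (B * (β - α) / β) η β ^ η =
      ((η - α) / (β - α)) ^ (η / (β - η)) * (N ^ (η / (β - η)) / B ^ (η / (β - η))) := by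
    rw [powDiffPeak, hratio, ← Real.rpow_mul (by positivity), one_div_mul_eq_div,
      Real.mul_rpow (by positivity) (by positivity), Real.div_rpow hN.le hB.le]
  have hNsplit : N ^ (β / (β - η)) = N * N ^ (η / (β - η)) := by
    rw [← Real.rpow_one_add' hN.le (by positivity)]
    congr 1
    field_simp
    ring
  rw [powDiff_powDiffPeak ha hb hη hηβ, hpeak, cExt, hNsplit]
  field_simp

/-- For `N > 0`, `A > 0`, `B > 0` and
`c_ext = −((η−α)(β−η)/(ηβα))·((η−α)/(β−α))^{η/(β−η)}·N^{β/(β−η)}/B^{η/(β−η)}`,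
if `c_ext < c < 0` then `φ_c` has exactly two critical points `t⁺ < t⁻` in `(0,∞)`,
with `φ_c″(t⁺) > 0`, `φ_c″(t⁻) < 0`, `t⁺` a local minimizer and `t⁻` a local
maximizer of `φ_c`. -/
theorem stmt7 (α η β N A B : ℝ) (h1 : 1 < α) (h2 : α < η) (h3 : η < β)
    (hN : 0 < N) (hA : 0 < A) (hB : 0 < B) (c : ℝ)
    (hcl : -((η - α) * (β - η) / (η * β * α)) * ((η - α) / (β - α)) ^ (η / (β - η)) *
        (N ^ (β / (β - η)) / B ^ (η / (β - η))) < c)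
    (hcu : c < 0) :
    ∃ tp tm : ℝ, 0 < tp ∧ tp < tm ∧
      deriv (fib α η β N A B c) tp = 0 ∧ deriv (fib α η β N A B c) tm = 0 ∧
      (∀ t : ℝ, 0 < t → deriv (fib α η β N A B c) t = 0 → t = tp ∨ t = tm) ∧
      0 < deriv (deriv (fib α η β N A B c)) tp ∧
      deriv (deriv (fib α η β N A B c)) tm < 0 ∧
      IsLocalMin (fib α η β N A B c) tp ∧ IsLocalMax (fib α η β N A B c) tm := by
  have hα : 0 < α := zero_lt_one.trans h1
  have hη := hα.trans h2
  have hβ := hη.trans h3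
  set a := N * (η - α) / η
  set b := B * (β - α) / β
  have ha : 0 < a := div_pos (mul_pos hN (sub_pos.2 h2)) hη
  have hb : 0 < b := div_pos (mul_pos hB (sub_pos.2 (h2.trans h3))) hβ
  have hcrit := fun t (ht : 0 < t) =>
    deriv_fib_eq_zero_iff (N := N) (B := B) (c := c) hα hη.ne' hβ.ne' hA ht
  have hzero : powDiff a b η β 0 < -(c * α) := by
    rw [powDiff_zero hη.ne' hβ.ne']
    exact neg_pos.2 (mul_neg_of_neg_of_pos hcu hα)
  have hpeak : -(c * α) < powDiff a b η β (powDiffPeak a b η β) := by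
    have := mul_lt_mul_of_pos_right (show cExt α η β N B < c from hcl) hα
    rw [cExt_mul_eq hα h2 h3 hN hB] at this
    linarith
  obtain ⟨tp, tm, htp, htps, hstm, hgtp, hgtm, honly⟩ :=
    exists_two_preimages_of_unimodal (powDiffPeak_pos ha hb hη h3).le
      (continuous_powDiff hη.le hβ.le) (strictMonoOn_powDiff ha hb hη h3)
      (strictAntiOn_powDiff ha hb hη h3) hzero hpeak (tendsto_powDiff_atTop hb hη h3)
  have htm := htp.trans (htps.trans hstm)
  have hmin : 0 < deriv (deriv (fib α η β N A B c)) tp := by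
    rw [deriv_deriv_fib hα.ne' hη.ne' hβ.ne' hA.ne' htp hgtp]
    exact mul_pos (by positivity) (deriv_powDiff_pos ha hb hη h3 htp htps)
  have hmax : deriv (deriv (fib α η β N A B c)) tm < 0 := by
    rw [deriv_deriv_fib hα.ne' hη.ne' hβ.ne' hA.ne' htm hgtm]
    exact mul_neg_of_pos_of_neg (by positivity) (deriv_powDiff_neg ha hb hη h3 hstm)
  have hcont := fun t (ht : 0 < t) =>
    (hasDerivAt_fib (N := N) (B := B) (c := c) hα.ne' hη.ne' hβ.ne' hA.ne' ht).continuousAt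
  refine ⟨tp, tm, htp, htps.trans hstm, (hcrit tp htp).2 hgtp, (hcrit tm htm).2 hgtm,
    fun t ht hφt => honly t ht.le ((hcrit t ht).1 hφt), hmin, hmax,
    isLocalMin_of_deriv_deriv_pos hmin ((hcrit tp htp).2 hgtp) (hcont tp htp),
    isLocalMax_of_deriv_deriv_neg hmax ((hcrit tm htm).2 hgtm) (hcont tm htm)⟩
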